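/- Let p, r ∈ ℕ, let c : Fin r → Fin r → Fin r → ℝ be Lie structure constants (skew-symmetric and satisfying the structure-constant Jacobi identity), and let Φ : (Fin p → ℝ) → Matrix (Fin p) (Fin r) ℝ be a smooth matrix of infinitesimals compatible with c. Define the block structure matrix [Λ](z, ξ) ∈ Matrix (Fin p ⊕ Fin r) (Fin p ⊕ Fin r) ℝ with blocks [Λ] = fromBlocks 0 (Φ(z)) (−Φ(z)ᵀ) (L(ξ)), where L(ξ) i j = Σ_{k ∈ Fin r} c i j k * ξ k, and define a bracket on smooth real-valued functions F, H of (z, ξ) ∈ (Fin p → ℝ) × (Fin r → ℝ) by {F, H}(w) = Σ_{a, b} ∂_a F(w) * [Λ](w)_{a b} * ∂_b H(w), the sum being over all coordinates a, b of (z, ξ). Then {·,·} is a Poisson bracket; in particular, for all smooth F, G, H: {F, {G, H}} + {G, {H, F}} + {H, {F, G}} = 0. -/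

import Mathlib

open Matrix
open ContDiff

/-- Directional (partial) derivative of `f` at `w` in the `a`-th coordinate direction. -/
noncomputable def pd {ι : Type*} [Fintype ι] [DecidableEq ι]
    (a : ι) (f : (ι → ℝ) → ℝ) (w : ι → ℝ) : ℝ :=
  fderiv ℝ f w (Pi.single a 1)

section lemmas
set_option linter.unusedSectionVars false
variable {ι : Type*} [Fintype ι] [DecidableEq ι]

lemma pd_contDiff (a : ι) {f : (ι → ℝ) → ℝ} (hf : ContDiff ℝ ∞ f) :
    ContDiff ℝ ∞ (pd a f) := by
  have h1 : ContDiff ℝ ∞ (fderiv ℝ f) := hf.fderiv_right (by simp)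
  exact h1.clm_apply contDiff_const

lemma pd_const (a : ι) (x : ℝ) (w : ι → ℝ) : pd a (fun _ => x) w = 0 := by
  simp [pd]

lemma pd_zero (a : ι) (w : ι → ℝ) : pd a (fun _ => (0:ℝ)) w = 0 := pd_const a 0 w

lemma pd_mul (a : ι) {f g : (ι → ℝ) → ℝ} {w : ι → ℝ}
    (hf : DifferentiableAt ℝ f w) (hg : DifferentiableAt ℝ g w) :
    pd a (fun v => f v * g v) w = pd a f w * g w + f w * pd a g w := by
  simp [pd, fderiv_fun_mul hf hg]; ring

lemma pd_sum (a : ι) {κ : Type*} (s : Finset κ) {f : κ → (ι → ℝ) → ℝ} {w : ι → ℝ}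
    (hf : ∀ b ∈ s, DifferentiableAt ℝ (f b) w) :
    pd a (fun v => ∑ b ∈ s, f b v) w = ∑ b ∈ s, pd a (f b) w := by
  simp only [pd]
  rw [fderiv_fun_sum hf]
  simp

lemma pd_comm {a b : ι} {f : (ι → ℝ) → ℝ} (hf : ContDiff ℝ ∞ f) (w : ι → ℝ) :
    pd a (pd b f) w = pd b (pd a f) w := by
  have hsymm : IsSymmSndFDerivAt ℝ f w :=
    (hf.contDiffAt).isSymmSndFDerivAt (by rw [minSmoothness_of_isRCLikeNormedField]; norm_cast)
  have hd : DifferentiableAt ℝ (fderiv ℝ f) w :=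
    ((hf.fderiv_right (m := ∞) (by simp)).differentiable (by norm_cast)) w
  have h1 : ∀ e u : ι, pd e (pd u f) w = fderiv ℝ (fderiv ℝ f) w (Pi.single e 1) (Pi.single u 1) := by
    intro e u
    show fderiv ℝ (fun v => fderiv ℝ f v (Pi.single u 1)) w (Pi.single e 1) = _
    rw [fderiv_clm_apply hd (differentiableAt_const _)]
    simp
  rw [h1, h1]
  exact hsymm _ _

lemma cd_diff {f : (ι → ℝ) → ℝ} (hf : ContDiff ℝ ∞ f) (w : ι → ℝ) :
    DifferentiableAt ℝ f w := (hf.differentiable (by norm_cast)) w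

lemma pd_proj (e t : ι) (w : ι → ℝ) : pd e (fun v => v t) w = (Pi.single e 1 : ι → ℝ) t := by
  have h : (fun v : ι → ℝ => v t) = ⇑(ContinuousLinearMap.proj (R := ℝ) (φ := fun _ : ι => ℝ) t) := rfl
  rw [pd, h, ContinuousLinearMap.fderiv]
  rfl

lemma pd_const_mul (e : ι) (x : ℝ) {f : (ι → ℝ) → ℝ} {w : ι → ℝ}
    (hf : DifferentiableAt ℝ f w) :
    pd e (fun v => x * f v) w = x * pd e f w := by
  rw [pd, fderiv_const_mul hf]; rfl

lemma sum4_eq (f : ι → ι → ι → ι → ℝ) :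
    ∑ x, ∑ e, ∑ a, ∑ b, f x e a b
      = ∑ t : ι × ι × ι × ι, f t.1 t.2.1 t.2.2.1 t.2.2.2 := by
  rw [Fintype.sum_prod_type]
  refine Finset.sum_congr rfl fun x _ => ?_
  rw [Fintype.sum_prod_type]
  refine Finset.sum_congr rfl fun e _ => ?_
  rw [Fintype.sum_prod_type]


lemma cyc_expand (lam : ι → ι → ℝ) (dl : ι → ι → ι → ℝ)
    (pa qa ra : ι → ℝ) (qh rh : ι → ι → ℝ) :
    (∑ x, ∑ e, pa x * lam x e *
        (∑ a, ∑ b, ((qh e a * lam a b + qa a * dl e a b) * ra b + qa a * lam a b * rh e b)))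
      = (∑ t : ι × ι × ι × ι,
          pa t.1 * lam t.1 t.2.1 * qh t.2.1 t.2.2.1 * lam t.2.2.1 t.2.2.2 * ra t.2.2.2)
      + (∑ t : ι × ι × ι × ι,
          pa t.1 * lam t.1 t.2.1 * qa t.2.2.1 * dl t.2.1 t.2.2.1 t.2.2.2 * ra t.2.2.2)
      + (∑ t : ι × ι × ι × ι,
          pa t.1 * lam t.1 t.2.1 * qa t.2.2.1 * lam t.2.2.1 t.2.2.2 * rh t.2.1 t.2.2.2) := by
  rw [← Finset.sum_add_distrib, ← Finset.sum_add_distrib]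
  rw [show (∑ x, ∑ e, pa x * lam x e *
        (∑ a, ∑ b, ((qh e a * lam a b + qa a * dl e a b) * ra b + qa a * lam a b * rh e b)))
      = ∑ x, ∑ e, ∑ a, ∑ b, pa x * lam x e *
          ((qh e a * lam a b + qa a * dl e a b) * ra b + qa a * lam a b * rh e b) by
    simp only [Finset.mul_sum]]
  rw [sum4_eq (fun x e a b => pa x * lam x e *
        ((qh e a * lam a b + qa a * dl e a b) * ra b + qa a * lam a b * rh e b))]
  exact Finset.sum_congr rfl fun t _ => by ring

lemma pair_cancel (lam : ι → ι → ℝ) (pa ra : ι → ℝ) (qh : ι → ι → ℝ)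
    (hlam : ∀ a b, lam b a = -lam a b) (hqh : ∀ a b, qh a b = qh b a) :
    (∑ t : ι × ι × ι × ι,
        pa t.1 * lam t.1 t.2.1 * qh t.2.1 t.2.2.1 * lam t.2.2.1 t.2.2.2 * ra t.2.2.2)
    + (∑ t : ι × ι × ι × ι,
        ra t.1 * lam t.1 t.2.1 * pa t.2.2.1 * lam t.2.2.1 t.2.2.2 * qh t.2.1 t.2.2.2) = 0 := by
  have h : (∑ t : ι × ι × ι × ι,
        ra t.1 * lam t.1 t.2.1 * pa t.2.2.1 * lam t.2.2.1 t.2.2.2 * qh t.2.1 t.2.2.2)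
      = ∑ t : ι × ι × ι × ι,
        -(pa t.1 * lam t.1 t.2.1 * qh t.2.1 t.2.2.1 * lam t.2.2.1 t.2.2.2 * ra t.2.2.2) := by
    refine Fintype.sum_equiv
      ⟨fun t => (t.2.2.1, t.2.2.2, t.2.1, t.1), fun t => (t.2.2.2, t.2.2.1, t.1, t.2.1),
        fun ⟨x, e, a, b⟩ => rfl, fun ⟨x, e, a, b⟩ => rfl⟩ _ _ ?_
    rintro ⟨x, e, a, b⟩
    simp only [Equiv.coe_fn_mk]
    rw [hlam x e, hqh e b]
    ring
  rw [h, Finset.sum_neg_distrib]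
  ring

lemma bsum_cancel (lam : ι → ι → ℝ) (dl : ι → ι → ι → ℝ) (fa ga ha : ι → ℝ)
    (hT : ∀ a b d, ∑ e, (lam a e * dl e b d + lam b e * dl e d a + lam d e * dl e a b) = 0) :
    (∑ t : ι × ι × ι × ι,
        fa t.1 * lam t.1 t.2.1 * ga t.2.2.1 * dl t.2.1 t.2.2.1 t.2.2.2 * ha t.2.2.2)
    + (∑ t : ι × ι × ι × ι,
        ga t.1 * lam t.1 t.2.1 * ha t.2.2.1 * dl t.2.1 t.2.2.1 t.2.2.2 * fa t.2.2.2)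
    + (∑ t : ι × ι × ι × ι,
        ha t.1 * lam t.1 t.2.1 * fa t.2.2.1 * dl t.2.1 t.2.2.1 t.2.2.2 * ga t.2.2.2) = 0 := by
  have h1 : (∑ t : ι × ι × ι × ι,
        fa t.1 * lam t.1 t.2.1 * ga t.2.2.1 * dl t.2.1 t.2.2.1 t.2.2.2 * ha t.2.2.2)
      = ∑ t : ι × ι × ι × ι,
        fa t.1 * ga t.2.1 * ha t.2.2.1 * (lam t.1 t.2.2.2 * dl t.2.2.2 t.2.1 t.2.2.1) := by
    refine Fintype.sum_equiv
      ⟨fun t => (t.1, t.2.2.1, t.2.2.2, t.2.1), fun t => (t.1, t.2.2.2, t.2.1, t.2.2.1),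
        fun ⟨x, e, a, b⟩ => rfl, fun ⟨x, e, a, b⟩ => rfl⟩ _ _ ?_
    rintro ⟨x, e, a, b⟩
    simp only [Equiv.coe_fn_mk]
    ring
  have h2 : (∑ t : ι × ι × ι × ι,
        ga t.1 * lam t.1 t.2.1 * ha t.2.2.1 * dl t.2.1 t.2.2.1 t.2.2.2 * fa t.2.2.2)
      = ∑ t : ι × ι × ι × ι,
        fa t.1 * ga t.2.1 * ha t.2.2.1 * (lam t.2.1 t.2.2.2 * dl t.2.2.2 t.2.2.1 t.1) := by
    refine Fintype.sum_equiv
      ⟨fun t => (t.2.2.2, t.1, t.2.2.1, t.2.1), fun t => (t.2.1, t.2.2.2, t.2.2.1, t.1),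
        fun ⟨x, e, a, b⟩ => rfl, fun ⟨x, e, a, b⟩ => rfl⟩ _ _ ?_
    rintro ⟨x, e, a, b⟩
    simp only [Equiv.coe_fn_mk]
    ring
  have h3 : (∑ t : ι × ι × ι × ι,
        ha t.1 * lam t.1 t.2.1 * fa t.2.2.1 * dl t.2.1 t.2.2.1 t.2.2.2 * ga t.2.2.2)
      = ∑ t : ι × ι × ι × ι,
        fa t.1 * ga t.2.1 * ha t.2.2.1 * (lam t.2.2.1 t.2.2.2 * dl t.2.2.2 t.1 t.2.1) := by
    refine Fintype.sum_equiv
      ⟨fun t => (t.2.2.1, t.2.2.2, t.1, t.2.1), fun t => (t.2.2.1, t.2.2.2, t.1, t.2.1),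
        fun ⟨x, e, a, b⟩ => rfl, fun ⟨x, e, a, b⟩ => rfl⟩ _ _ ?_
    rintro ⟨x, e, a, b⟩
    simp only [Equiv.coe_fn_mk]
    ring
  rw [h1, h2, h3, ← Finset.sum_add_distrib, ← Finset.sum_add_distrib]
  rw [← sum4_eq (fun X A B E => fa X * ga A * ha B * (lam X E * dl E A B)
      + fa X * ga A * ha B * (lam A E * dl E B X)
      + fa X * ga A * ha B * (lam B E * dl E X A))]
  refine Finset.sum_eq_zero fun X _ => Finset.sum_eq_zero fun A _ => Finset.sum_eq_zero fun B _ => ?_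
  have := hT X A B
  calc ∑ E, (fa X * ga A * ha B * (lam X E * dl E A B)
        + fa X * ga A * ha B * (lam A E * dl E B X)
        + fa X * ga A * ha B * (lam B E * dl E X A))
      = fa X * ga A * ha B *
          ∑ E, (lam X E * dl E A B + lam A E * dl E B X + lam B E * dl E X A) := by
        rw [Finset.mul_sum]; exact Finset.sum_congr rfl fun E _ => by ring
    _ = 0 := by rw [hT X A B, mul_zero]

lemma key_alg (lam : ι → ι → ℝ) (dl : ι → ι → ι → ℝ) (fa ga ha : ι → ℝ)
    (fh gh hh : ι → ι → ℝ)
    (hlam : ∀ a b, lam b a = -lam a b)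
    (hfh : ∀ a b, fh a b = fh b a) (hgh : ∀ a b, gh a b = gh b a)
    (hhh : ∀ a b, hh a b = hh b a)
    (hT : ∀ a b d, ∑ e, (lam a e * dl e b d + lam b e * dl e d a + lam d e * dl e a b) = 0) :
    (∑ x, ∑ e, fa x * lam x e *
        (∑ a, ∑ b, ((gh e a * lam a b + ga a * dl e a b) * ha b + ga a * lam a b * hh e b)))
    + (∑ x, ∑ e, ga x * lam x e *
        (∑ a, ∑ b, ((hh e a * lam a b + ha a * dl e a b) * fa b + ha a * lam a b * fh e b)))
    + (∑ x, ∑ e, ha x * lam x e *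
        (∑ a, ∑ b, ((fh e a * lam a b + fa a * dl e a b) * ga b + fa a * lam a b * gh e b))) = 0 := by
  rw [cyc_expand lam dl fa ga ha gh hh, cyc_expand lam dl ga ha fa hh fh,
    cyc_expand lam dl ha fa ga fh gh]
  have P1 := pair_cancel lam fa ha gh hlam hgh
  have P2 := pair_cancel lam ga fa hh hlam hhh
  have P3 := pair_cancel lam ha ga fh hlam hfh
  have B := bsum_cancel lam dl fa ga ha hT
  linarith

end lemmas


/-- The block Poisson structure matrix `[Λ] = fromBlocks 0 Φ (-Φᵀ) L(ξ)` on
`M × 𝔤* ≃ (Fin p ⊕ Fin r) → ℝ`, where `L(ξ) i j = ∑ k, c i j k * ξ k` is the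
Lie–Poisson matrix. -/
noncomputable def blockLambda {p r : ℕ} (c : Fin r → Fin r → Fin r → ℝ)
    (Φ : (Fin p → ℝ) → Matrix (Fin p) (Fin r) ℝ) (w : (Fin p ⊕ Fin r) → ℝ) :
    Matrix (Fin p ⊕ Fin r) (Fin p ⊕ Fin r) ℝ :=
  Matrix.fromBlocks 0 (Φ (w ∘ Sum.inl)) (-(Φ (w ∘ Sum.inl))ᵀ)
    (Matrix.of fun i j => ∑ k, c i j k * (w ∘ Sum.inr) k)

/-- The bracket `{F, H}(w) = ∑ a b, ∂_a F(w) * [Λ](w) a b * ∂_b H(w)`. -/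
noncomputable def pbracket {p r : ℕ} (c : Fin r → Fin r → Fin r → ℝ)
    (Φ : (Fin p → ℝ) → Matrix (Fin p) (Fin r) ℝ)
    (F H : ((Fin p ⊕ Fin r) → ℝ) → ℝ) (w : (Fin p ⊕ Fin r) → ℝ) : ℝ :=
  ∑ a, ∑ b, pd a F w * blockLambda c Φ w a b * pd b H w

section specific
variable {p r : ℕ} (c : Fin r → Fin r → Fin r → ℝ)
  (Φ : (Fin p → ℝ) → Matrix (Fin p) (Fin r) ℝ)

lemma lam_ll (m n : Fin p) (w : (Fin p ⊕ Fin r) → ℝ) :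
    blockLambda c Φ w (Sum.inl m) (Sum.inl n) = 0 := by
  simp [blockLambda]

lemma lam_lr (m : Fin p) (j : Fin r) (w : (Fin p ⊕ Fin r) → ℝ) :
    blockLambda c Φ w (Sum.inl m) (Sum.inr j) = Φ (w ∘ Sum.inl) m j := by
  simp [blockLambda]

lemma lam_rl (i : Fin r) (m : Fin p) (w : (Fin p ⊕ Fin r) → ℝ) :
    blockLambda c Φ w (Sum.inr i) (Sum.inl m) = -Φ (w ∘ Sum.inl) m i := by
  simp [blockLambda]

lemma lam_rr (i j : Fin r) (w : (Fin p ⊕ Fin r) → ℝ) :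
    blockLambda c Φ w (Sum.inr i) (Sum.inr j) = ∑ k, c i j k * w (Sum.inr k) := by
  simp [blockLambda]

/-- The restriction to the first block of coordinates, as a CLM. -/
noncomputable def restr (p r : ℕ) : ((Fin p ⊕ Fin r) → ℝ) →L[ℝ] (Fin p → ℝ) :=
  ContinuousLinearMap.pi fun i => ContinuousLinearMap.proj (Sum.inl i)

lemma restr_apply (v : (Fin p ⊕ Fin r) → ℝ) : restr p r v = v ∘ Sum.inl := rfl

lemma restr_contDiff : ContDiff ℝ ∞ (fun w : (Fin p ⊕ Fin r) → ℝ => w ∘ Sum.inl) :=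
  (restr p r).contDiff

lemma pd_comp_restr (g : (Fin p → ℝ) → ℝ) (hg : ContDiff ℝ ∞ g)
    (e : Fin p ⊕ Fin r) (w : (Fin p ⊕ Fin r) → ℝ) :
    pd e (fun v => g (v ∘ Sum.inl)) w
      = fderiv ℝ g (w ∘ Sum.inl) ((Pi.single e 1 : (Fin p ⊕ Fin r) → ℝ) ∘ Sum.inl) := by
  have h : (fun v : (Fin p ⊕ Fin r) → ℝ => g (v ∘ Sum.inl)) = g ∘ (restr p r) := rfl
  rw [pd, h, fderiv_comp w (cd_diff hg _) (restr p r).differentiableAt,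
    ContinuousLinearMap.fderiv]
  rfl

lemma single_inl_comp (l : Fin p) :
    ((Pi.single (Sum.inl l : Fin p ⊕ Fin r) 1 : (Fin p ⊕ Fin r) → ℝ) ∘ Sum.inl)
      = (Pi.single l 1 : Fin p → ℝ) := by
  funext i
  simp [Pi.single_apply, Sum.inl.injEq]

lemma single_inr_comp (k : Fin r) :
    ((Pi.single (Sum.inr k : Fin p ⊕ Fin r) 1 : (Fin p ⊕ Fin r) → ℝ) ∘ Sum.inl)
      = (0 : Fin p → ℝ) := by
  funext i
  simp [Pi.single_apply]


lemma pd_neg {ι : Type*} [Fintype ι] [DecidableEq ι] (e : ι) (f : (ι → ℝ) → ℝ) (w : ι → ℝ) :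
    pd e (fun v => -f v) w = -pd e f w := by
  rw [pd, fderiv_fun_neg]; rfl

variable (hsm : ∀ m j, ContDiff ℝ ∞ fun z => Φ z m j)

include hsm in
lemma lam_contDiff : ∀ a b, ContDiff ℝ ∞ (fun w : (Fin p ⊕ Fin r) → ℝ => blockLambda c Φ w a b) := by
  rintro (m | i) (n | j)
  · simp only [lam_ll]; exact contDiff_const
  · simp only [lam_lr]; exact (hsm m j).comp restr_contDiff
  · simp only [lam_rl]
    exact ((hsm n i).comp restr_contDiff).neg
  · simp only [lam_rr]
    exact ContDiff.sum fun k _ =>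
      contDiff_const.mul (ContinuousLinearMap.proj (R := ℝ) (φ := fun _ : Fin p ⊕ Fin r => ℝ) (Sum.inr k)).contDiff

lemma pd_lam_ll (e : Fin p ⊕ Fin r) (m n : Fin p) (w : (Fin p ⊕ Fin r) → ℝ) :
    pd e (fun v => blockLambda c Φ v (Sum.inl m) (Sum.inl n)) w = 0 := by
  simp only [lam_ll]; exact pd_const e 0 w

lemma diff_proj_at (t : Fin p ⊕ Fin r) (w : (Fin p ⊕ Fin r) → ℝ) :
    DifferentiableAt ℝ (fun v : (Fin p ⊕ Fin r) → ℝ => v t) w :=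
  (ContinuousLinearMap.proj (R := ℝ) (φ := fun _ : Fin p ⊕ Fin r => ℝ) t).differentiableAt

include hsm in
lemma pd_lam_lr_inl (l m : Fin p) (j : Fin r) (w : (Fin p ⊕ Fin r) → ℝ) :
    pd (Sum.inl l) (fun v => blockLambda c Φ v (Sum.inl m) (Sum.inr j)) w
      = pd l (fun z => Φ z m j) (w ∘ Sum.inl) := by
  simp only [lam_lr]
  rw [pd_comp_restr _ (hsm m j), single_inl_comp]
  rfl

include hsm in
lemma pd_lam_lr_inr (k : Fin r) (m : Fin p) (j : Fin r) (w : (Fin p ⊕ Fin r) → ℝ) :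
    pd (Sum.inr k) (fun v => blockLambda c Φ v (Sum.inl m) (Sum.inr j)) w = 0 := by
  simp only [lam_lr]
  rw [pd_comp_restr _ (hsm m j), single_inr_comp, map_zero]

include hsm in
lemma pd_lam_rl_inl (l : Fin p) (i : Fin r) (m : Fin p) (w : (Fin p ⊕ Fin r) → ℝ) :
    pd (Sum.inl l) (fun v => blockLambda c Φ v (Sum.inr i) (Sum.inl m)) w
      = -pd l (fun z => Φ z m i) (w ∘ Sum.inl) := by
  simp only [lam_rl]
  rw [pd_neg, pd_comp_restr _ (hsm m i), single_inl_comp]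
  rfl

include hsm in
lemma pd_lam_rl_inr (k i : Fin r) (m : Fin p) (w : (Fin p ⊕ Fin r) → ℝ) :
    pd (Sum.inr k) (fun v => blockLambda c Φ v (Sum.inr i) (Sum.inl m)) w = 0 := by
  simp only [lam_rl]
  rw [pd_neg, pd_comp_restr _ (hsm m i), single_inr_comp, map_zero, neg_zero]

lemma pd_lam_rr (e : Fin p ⊕ Fin r) (i j : Fin r) (w : (Fin p ⊕ Fin r) → ℝ) :
    pd e (fun v => blockLambda c Φ v (Sum.inr i) (Sum.inr j)) w
      = ∑ k, c i j k * (Pi.single e 1 : (Fin p ⊕ Fin r) → ℝ) (Sum.inr k) := by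
  simp only [lam_rr]
  rw [pd_sum e Finset.univ (f := fun k v => c i j k * v (Sum.inr k))
      (fun k _ => (diff_proj_at (Sum.inr k) w).const_mul _)]
  refine Finset.sum_congr rfl fun k _ => ?_
  rw [pd_const_mul _ _ (diff_proj_at (Sum.inr k) w), pd_proj]

lemma pd_lam_rr_inl (l : Fin p) (i j : Fin r) (w : (Fin p ⊕ Fin r) → ℝ) :
    pd (Sum.inl l) (fun v => blockLambda c Φ v (Sum.inr i) (Sum.inr j)) w = 0 := by
  rw [pd_lam_rr]
  simp [Pi.single_apply]

lemma pd_lam_rr_inr (k0 : Fin r) (i j : Fin r) (w : (Fin p ⊕ Fin r) → ℝ) :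
    pd (Sum.inr k0) (fun v => blockLambda c Φ v (Sum.inr i) (Sum.inr j)) w = c i j k0 := by
  rw [pd_lam_rr]
  simp [Pi.single_apply, Sum.inr.injEq, mul_ite]


/-- The cyclic structure-matrix expression. -/
noncomputable def Texp (w : (Fin p ⊕ Fin r) → ℝ) (a b d : Fin p ⊕ Fin r) : ℝ :=
  ∑ e, (blockLambda c Φ w a e * pd e (fun v => blockLambda c Φ v b d) w
      + blockLambda c Φ w b e * pd e (fun v => blockLambda c Φ v d a) w
      + blockLambda c Φ w d e * pd e (fun v => blockLambda c Φ v a b) w)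

lemma Trot (w : (Fin p ⊕ Fin r) → ℝ) (a b d : Fin p ⊕ Fin r) :
    Texp c Φ w a b d = Texp c Φ w b d a :=
  Finset.sum_congr rfl fun e _ => by ring

lemma lam_antisym (hskew : ∀ i j k, c j i k = -(c i j k))
    (w : (Fin p ⊕ Fin r) → ℝ) (a b : Fin p ⊕ Fin r) :
    blockLambda c Φ w b a = -blockLambda c Φ w a b := by
  rcases a with m | i <;> rcases b with n | j
  · rw [lam_ll, lam_ll, neg_zero]
  · rw [lam_rl, lam_lr]
  · rw [lam_lr, lam_rl, neg_neg]
  · rw [lam_rr, lam_rr, ← Finset.sum_neg_distrib]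
    exact Finset.sum_congr rfl fun k _ => by rw [hskew i j k]; ring

lemma core_lll (m n q : Fin p) (w : (Fin p ⊕ Fin r) → ℝ) :
    Texp c Φ w (Sum.inl m) (Sum.inl n) (Sum.inl q) = 0 := by
  unfold Texp
  simp only [pd_lam_ll, mul_zero, add_zero, Finset.sum_const_zero]

include hsm in
lemma core_llr (m n : Fin p) (j : Fin r) (w : (Fin p ⊕ Fin r) → ℝ) :
    Texp c Φ w (Sum.inl m) (Sum.inl n) (Sum.inr j) = 0 := by
  unfold Texp
  rw [Fintype.sum_sum_type]
  have h1 : ∀ s : Fin p,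
      blockLambda c Φ w (Sum.inl m) (Sum.inl s)
          * pd (Sum.inl s) (fun v => blockLambda c Φ v (Sum.inl n) (Sum.inr j)) w
        + blockLambda c Φ w (Sum.inl n) (Sum.inl s)
          * pd (Sum.inl s) (fun v => blockLambda c Φ v (Sum.inr j) (Sum.inl m)) w
        + blockLambda c Φ w (Sum.inr j) (Sum.inl s)
          * pd (Sum.inl s) (fun v => blockLambda c Φ v (Sum.inl m) (Sum.inl n)) w = 0 := by
    intro s
    rw [lam_ll, lam_ll, pd_lam_ll, mul_zero, zero_mul, zero_mul]; ring
  have h2 : ∀ k : Fin r,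
      blockLambda c Φ w (Sum.inl m) (Sum.inr k)
          * pd (Sum.inr k) (fun v => blockLambda c Φ v (Sum.inl n) (Sum.inr j)) w
        + blockLambda c Φ w (Sum.inl n) (Sum.inr k)
          * pd (Sum.inr k) (fun v => blockLambda c Φ v (Sum.inr j) (Sum.inl m)) w
        + blockLambda c Φ w (Sum.inr j) (Sum.inr k)
          * pd (Sum.inr k) (fun v => blockLambda c Φ v (Sum.inl m) (Sum.inl n)) w = 0 := by
    intro k
    rw [pd_lam_ll, pd_lam_lr_inr c Φ hsm, pd_lam_rl_inr c Φ hsm, mul_zero, mul_zero, mul_zero]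
    ring
  rw [Finset.sum_congr rfl fun s _ => h1 s, Finset.sum_congr rfl fun k _ => h2 k]
  simp

include hsm in
lemma core_lrr
    (hΦcompat : ∀ (i j : Fin r) (m : Fin p) (z : Fin p → ℝ),
      ∑ l, (Φ z l i * pd l (fun v => Φ v m j) z - Φ z l j * pd l (fun v => Φ v m i) z)
        = -∑ k, c i j k * Φ z m k)
    (m : Fin p) (i j : Fin r) (w : (Fin p ⊕ Fin r) → ℝ) :
    Texp c Φ w (Sum.inl m) (Sum.inr i) (Sum.inr j) = 0 := by
  unfold Texp
  rw [Fintype.sum_sum_type]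
  have hs : (∑ s : Fin p,
      (blockLambda c Φ w (Sum.inl m) (Sum.inl s)
          * pd (Sum.inl s) (fun v => blockLambda c Φ v (Sum.inr i) (Sum.inr j)) w
        + blockLambda c Φ w (Sum.inr i) (Sum.inl s)
          * pd (Sum.inl s) (fun v => blockLambda c Φ v (Sum.inr j) (Sum.inl m)) w
        + blockLambda c Φ w (Sum.inr j) (Sum.inl s)
          * pd (Sum.inl s) (fun v => blockLambda c Φ v (Sum.inl m) (Sum.inr i)) w))
      = ∑ s, (Φ (w ∘ Sum.inl) s i * pd s (fun v => Φ v m j) (w ∘ Sum.inl)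
          - Φ (w ∘ Sum.inl) s j * pd s (fun v => Φ v m i) (w ∘ Sum.inl)) := by
    refine Finset.sum_congr rfl fun s _ => ?_
    rw [lam_ll, lam_rl, lam_rl, pd_lam_rl_inl c Φ hsm, pd_lam_lr_inl c Φ hsm]
    ring
  have hk : (∑ k : Fin r,
      (blockLambda c Φ w (Sum.inl m) (Sum.inr k)
          * pd (Sum.inr k) (fun v => blockLambda c Φ v (Sum.inr i) (Sum.inr j)) w
        + blockLambda c Φ w (Sum.inr i) (Sum.inr k)
          * pd (Sum.inr k) (fun v => blockLambda c Φ v (Sum.inr j) (Sum.inl m)) w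
        + blockLambda c Φ w (Sum.inr j) (Sum.inr k)
          * pd (Sum.inr k) (fun v => blockLambda c Φ v (Sum.inl m) (Sum.inr i)) w))
      = ∑ k, c i j k * Φ (w ∘ Sum.inl) m k := by
    refine Finset.sum_congr rfl fun k _ => ?_
    rw [lam_lr, pd_lam_rr_inr, pd_lam_rl_inr c Φ hsm, pd_lam_lr_inr c Φ hsm]
    ring
  rw [hs, hk, hΦcompat i j m (w ∘ Sum.inl)]
  ring

lemma core_rrr
    (hskew : ∀ i j k, c j i k = -(c i j k))
    (hjac : ∀ i j l m, ∑ k, (c i j k * c k l m + c j l k * c k i m + c l i k * c k j m) = 0)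
    (i j l : Fin r) (w : (Fin p ⊕ Fin r) → ℝ) :
    Texp c Φ w (Sum.inr i) (Sum.inr j) (Sum.inr l) = 0 := by
  unfold Texp
  rw [Fintype.sum_sum_type]
  have hs : (∑ s : Fin p,
      (blockLambda c Φ w (Sum.inr i) (Sum.inl s)
          * pd (Sum.inl s) (fun v => blockLambda c Φ v (Sum.inr j) (Sum.inr l)) w
        + blockLambda c Φ w (Sum.inr j) (Sum.inl s)
          * pd (Sum.inl s) (fun v => blockLambda c Φ v (Sum.inr l) (Sum.inr i)) w
        + blockLambda c Φ w (Sum.inr l) (Sum.inl s)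
          * pd (Sum.inl s) (fun v => blockLambda c Φ v (Sum.inr i) (Sum.inr j)) w))
      = 0 := by
    refine Finset.sum_eq_zero fun s _ => ?_
    rw [pd_lam_rr_inl, pd_lam_rr_inl, pd_lam_rr_inl, mul_zero, mul_zero, mul_zero]
    ring
  have key : ∀ t : Fin r,
      ∑ k, (c i k t * c j l k + c j k t * c l i k + c l k t * c i j k) = 0 := by
    intro t
    have hj := hjac i j l t
    calc ∑ k, (c i k t * c j l k + c j k t * c l i k + c l k t * c i j k)
        = -∑ k, (c i j k * c k l t + c j l k * c k i t + c l i k * c k j t) := by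
          rw [← Finset.sum_neg_distrib]
          refine Finset.sum_congr rfl fun k _ => ?_
          rw [hskew k i t, hskew k j t, hskew k l t]; ring
      _ = 0 := by rw [hj, neg_zero]
  have hk : (∑ k : Fin r,
      (blockLambda c Φ w (Sum.inr i) (Sum.inr k)
          * pd (Sum.inr k) (fun v => blockLambda c Φ v (Sum.inr j) (Sum.inr l)) w
        + blockLambda c Φ w (Sum.inr j) (Sum.inr k)
          * pd (Sum.inr k) (fun v => blockLambda c Φ v (Sum.inr l) (Sum.inr i)) w
        + blockLambda c Φ w (Sum.inr l) (Sum.inr k)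
          * pd (Sum.inr k) (fun v => blockLambda c Φ v (Sum.inr i) (Sum.inr j)) w))
      = 0 := by
    have step1 : ∀ k : Fin r,
        blockLambda c Φ w (Sum.inr i) (Sum.inr k)
            * pd (Sum.inr k) (fun v => blockLambda c Φ v (Sum.inr j) (Sum.inr l)) w
          + blockLambda c Φ w (Sum.inr j) (Sum.inr k)
            * pd (Sum.inr k) (fun v => blockLambda c Φ v (Sum.inr l) (Sum.inr i)) w
          + blockLambda c Φ w (Sum.inr l) (Sum.inr k)
            * pd (Sum.inr k) (fun v => blockLambda c Φ v (Sum.inr i) (Sum.inr j)) w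
        = ∑ t, (c i k t * c j l k + c j k t * c l i k + c l k t * c i j k) * w (Sum.inr t) := by
      intro k
      rw [pd_lam_rr_inr, pd_lam_rr_inr, pd_lam_rr_inr, lam_rr, lam_rr, lam_rr,
        Finset.sum_mul, Finset.sum_mul, Finset.sum_mul, ← Finset.sum_add_distrib,
        ← Finset.sum_add_distrib]
      exact Finset.sum_congr rfl fun t _ => by ring
    rw [Finset.sum_congr rfl fun k _ => step1 k, Finset.sum_comm]
    refine Finset.sum_eq_zero fun t _ => ?_
    rw [← Finset.sum_mul, key t, zero_mul]
  rw [hs, hk, add_zero]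

include hsm in
lemma Tid
    (hskew : ∀ i j k, c j i k = -(c i j k))
    (hjac : ∀ i j l m, ∑ k, (c i j k * c k l m + c j l k * c k i m + c l i k * c k j m) = 0)
    (hΦcompat : ∀ (i j : Fin r) (m : Fin p) (z : Fin p → ℝ),
      ∑ l, (Φ z l i * pd l (fun v => Φ v m j) z - Φ z l j * pd l (fun v => Φ v m i) z)
        = -∑ k, c i j k * Φ z m k)
    (w : (Fin p ⊕ Fin r) → ℝ) (a b d : Fin p ⊕ Fin r) :
    Texp c Φ w a b d = 0 := by
  rcases a with m | i <;> rcases b with n | j <;> rcases d with q | l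
  · exact core_lll c Φ m n q w
  · exact core_llr c Φ hsm m n l w
  · rw [Trot, Trot]; exact core_llr c Φ hsm q m j w
  · exact core_lrr c Φ hsm hΦcompat m j l w
  · rw [Trot]; exact core_llr c Φ hsm n q i w
  · rw [Trot]; exact core_lrr c Φ hsm hΦcompat n l i w
  · rw [Trot, Trot]; exact core_lrr c Φ hsm hΦcompat q i j w
  · exact core_rrr c Φ hskew hjac i j l w

end specific

/-- The bracket determined by the block structure matrix
`fromBlocks 0 Φ (-Φᵀ) Λ(𝔤*)` is a Poisson bracket: it satisfies the Jacobi identity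
on smooth functions. -/
theorem pbracket_jacobi {p r : ℕ} (c : Fin r → Fin r → Fin r → ℝ)
    (hskew : ∀ i j k, c j i k = -(c i j k))
    (hjac : ∀ i j l m, ∑ k, (c i j k * c k l m + c j l k * c k i m + c l i k * c k j m) = 0)
    (Φ : (Fin p → ℝ) → Matrix (Fin p) (Fin r) ℝ)
    (hΦsmooth : ∀ m j, ContDiff ℝ (⊤ : ℕ∞) fun z => Φ z m j)
    (hΦcompat : ∀ (i j : Fin r) (m : Fin p) (z : Fin p → ℝ),
      ∑ l, (Φ z l i * pd l (fun v => Φ v m j) z - Φ z l j * pd l (fun v => Φ v m i) z)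
        = -∑ k, c i j k * Φ z m k)
    (F G H : ((Fin p ⊕ Fin r) → ℝ) → ℝ)
    (hF : ContDiff ℝ (⊤ : ℕ∞) F) (hG : ContDiff ℝ (⊤ : ℕ∞) G) (hH : ContDiff ℝ (⊤ : ℕ∞) H) :
    ∀ w : (Fin p ⊕ Fin r) → ℝ,
      pbracket c Φ F (pbracket c Φ G H) w
      + pbracket c Φ G (pbracket c Φ H F) w
      + pbracket c Φ H (pbracket c Φ F G) w = 0 := by
  intro w
  have hF' : ContDiff ℝ ∞ F := hF.of_le (by simp)
  have hG' : ContDiff ℝ ∞ G := hG.of_le (by simp)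
  have hH' : ContDiff ℝ ∞ H := hH.of_le (by simp)
  have hsm : ∀ m j, ContDiff ℝ ∞ fun z => Φ z m j := fun m j => (hΦsmooth m j).of_le (by simp)
  have lamCD := lam_contDiff c Φ hsm
  have hexp : ∀ (P Q : ((Fin p ⊕ Fin r) → ℝ) → ℝ), ContDiff ℝ ∞ P → ContDiff ℝ ∞ Q →
      ∀ e, pd e (pbracket c Φ P Q) w
        = ∑ a, ∑ b, ((pd e (pd a P) w * blockLambda c Φ w a b
              + pd a P w * pd e (fun v => blockLambda c Φ v a b) w) * pd b Q w
            + pd a P w * blockLambda c Φ w a b * pd e (pd b Q) w) := by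
    intro P Q hP hQ e
    have hsummand : ∀ (a b : Fin p ⊕ Fin r),
        DifferentiableAt ℝ (fun v => pd a P v * blockLambda c Φ v a b * pd b Q v) w :=
      fun a b => cd_diff (((pd_contDiff a hP).mul (lamCD a b)).mul (pd_contDiff b hQ)) w
    have h0 : pd e (pbracket c Φ P Q) w
        = pd e (fun v => ∑ a, ∑ b, pd a P v * blockLambda c Φ v a b * pd b Q v) w := rfl
    rw [h0, pd_sum e Finset.univ (fun a _ => DifferentiableAt.fun_sum fun b _ => hsummand a b)]
    refine Finset.sum_congr rfl fun a _ => ?_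
    rw [pd_sum e Finset.univ (fun b _ => hsummand a b)]
    refine Finset.sum_congr rfl fun b _ => ?_
    have hfg : DifferentiableAt ℝ (fun v => pd a P v * blockLambda c Φ v a b) w :=
      cd_diff ((pd_contDiff a hP).mul (lamCD a b)) w
    rw [pd_mul e hfg (cd_diff (pd_contDiff b hQ) w),
      pd_mul e (cd_diff (pd_contDiff a hP) w) (cd_diff (lamCD a b) w)]
  have e1 : pbracket c Φ F (pbracket c Φ G H) w
      = ∑ x, ∑ e, pd x F w * blockLambda c Φ w x e
          * (∑ a, ∑ b, ((pd e (pd a G) w * blockLambda c Φ w a b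
              + pd a G w * pd e (fun v => blockLambda c Φ v a b) w) * pd b H w
            + pd a G w * blockLambda c Φ w a b * pd e (pd b H) w)) := by
    refine Finset.sum_congr rfl fun x _ => Finset.sum_congr rfl fun e _ => ?_
    rw [hexp G H hG' hH' e]
  have e2 : pbracket c Φ G (pbracket c Φ H F) w
      = ∑ x, ∑ e, pd x G w * blockLambda c Φ w x e
          * (∑ a, ∑ b, ((pd e (pd a H) w * blockLambda c Φ w a b
              + pd a H w * pd e (fun v => blockLambda c Φ v a b) w) * pd b F w
            + pd a H w * blockLambda c Φ w a b * pd e (pd b F) w)) := by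
    refine Finset.sum_congr rfl fun x _ => Finset.sum_congr rfl fun e _ => ?_
    rw [hexp H F hH' hF' e]
  have e3 : pbracket c Φ H (pbracket c Φ F G) w
      = ∑ x, ∑ e, pd x H w * blockLambda c Φ w x e
          * (∑ a, ∑ b, ((pd e (pd a F) w * blockLambda c Φ w a b
              + pd a F w * pd e (fun v => blockLambda c Φ v a b) w) * pd b G w
            + pd a F w * blockLambda c Φ w a b * pd e (pd b G) w)) := by
    refine Finset.sum_congr rfl fun x _ => Finset.sum_congr rfl fun e _ => ?_
    rw [hexp F G hF' hG' e]
  rw [e1, e2, e3]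
  exact key_alg (fun a b => blockLambda c Φ w a b)
    (fun e a b => pd e (fun v => blockLambda c Φ v a b) w)
    (fun a => pd a F w) (fun a => pd a G w) (fun a => pd a H w)
    (fun e a => pd e (pd a F) w) (fun e a => pd e (pd a G) w) (fun e a => pd e (pd a H) w)
    (fun a b => lam_antisym c Φ hskew w a b)
    (fun a b => pd_comm hF' w) (fun a b => pd_comm hG' w) (fun a b => pd_comm hH' w)
    (fun a b d => Tid c Φ hsm hskew hjac hΦcompat w a b d)
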